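/- arXiv:2106.14908 — 7 statements merged into one kernel-verified Lean document; each statement's English description precedes it below -/
import Mathlib

section
/- For every s ≥ 0, if m_s = (x_s + 5)/2 with (x_s, y_s) the Pell recursion x_0 = 3, y_0 = 1, x_{s+1} = 3x_s + 4y_s, y_{s+1} = 2x_s + 3y_s, then 2·m_s² − 10·m_s + 9 = y_s², i.e., 2m_s² − 10m_s + 9 is the square of an odd integer. -/
theorem pell_recursion_discriminant_square
    (x y : ℕ → ℤ) (hx0 : x 0 = 3) (hy0 : y 0 = 1)
    (hx : ∀ s, x (s + 1) = 3 * x s + 4 * y s)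
    (hy : ∀ s, y (s + 1) = 2 * x s + 3 * y s) :
    ∀ s, 2 * ((x s + 5) / 2) ^ 2 - 10 * ((x s + 5) / 2) + 9 = (y s) ^ 2 ∧ Odd (y s) := by
  have key : ∀ s, Odd (x s) ∧ Odd (y s) ∧ (x s) ^ 2 - 2 * (y s) ^ 2 = 7 := by
    intro s
    induction s with
    | zero => refine ⟨⟨1, ?_⟩, ⟨0, ?_⟩, ?_⟩ <;> simp [hx0, hy0] <;> ring
    | succ n ih =>
      obtain ⟨⟨a, ha⟩, ⟨b, hb⟩, h7⟩ := ih
      refine ⟨⟨3*a + 4*b + 3, ?_⟩, ⟨2*a + 3*b + 2, ?_⟩, ?_⟩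
      · rw [hx n, ha, hb]; ring
      · rw [hy n, ha, hb]; ring
      · rw [hx n, hy n]; nlinarith [h7]
  intro s
  obtain ⟨⟨a, ha⟩, hoy, h7⟩ := key s
  refine ⟨?_, hoy⟩
  have hm : (x s + 5) / 2 = a + 3 := by rw [ha]; omega
  rw [hm]
  nlinarith [h7, ha]
end

section
/- Let m be an integer with m ≥ 5 and suppose 2m² − 10m + 9 = y² for an odd positive integer y (so the fractional part of (1/2)√(2m²−10m+9) equals 1/2). Then ⌊5/2 + √(2m²−10m+9)/2⌋ > ⌊1/2 + √(2m²−2m+1)/2⌋. -/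
theorem floor_L_gt_R_of_odd_sqrt (m : ℤ) (hm : m ≥ 5)
    (h : ∃ y : ℤ, Odd y ∧ 0 < y ∧ y ^ 2 = 2 * m ^ 2 - 10 * m + 9) :
    ⌊(5 : ℝ) / 2 + Real.sqrt (2 * (m : ℝ) ^ 2 - 10 * m + 9) / 2⌋ >
      ⌊(1 : ℝ) / 2 + Real.sqrt (2 * (m : ℝ) ^ 2 - 2 * m + 1) / 2⌋ := by
  obtain ⟨y, ⟨k, hk⟩, hy, hsq⟩ := h
  have hyR : (0:ℝ) ≤ (y:ℝ) := by exact_mod_cast hy.le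
  have hrad : (2 * (m : ℝ) ^ 2 - 10 * m + 9) = (y:ℝ)^2 := by
    exact_mod_cast hsq.symm
  have hs1 : Real.sqrt (2 * (m : ℝ) ^ 2 - 10 * m + 9) = (y:ℝ) := by
    rw [hrad, Real.sqrt_sq hyR]
  have hL : (5 : ℝ) / 2 + Real.sqrt (2 * (m : ℝ) ^ 2 - 10 * m + 9) / 2
      = ((k + 3 : ℤ) : ℝ) := by
    rw [hs1, hk]; push_cast; ring
  rw [hL, Int.floor_intCast]
  rw [gt_iff_lt, Int.floor_lt]
  have hym : m - 3 < y := by nlinarith [hsq, hy, hm]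
  have h4 : (0:ℝ) < (y:ℝ) + 4 := by linarith
  have hlt : Real.sqrt (2 * (m : ℝ) ^ 2 - 2 * m + 1) < (y:ℝ) + 4 := by
    rw [show ((y:ℝ)+4) = Real.sqrt (((y:ℝ)+4)^2) from (Real.sqrt_sq h4.le).symm]
    apply Real.sqrt_lt_sqrt
    · nlinarith [sq_nonneg ((m:ℝ)-1)]
    · have : (m:ℝ) - 3 < (y:ℝ) := by exact_mod_cast hym
      nlinarith [hrad]
  have hk2 : (y:ℝ) = 2*(k:ℝ) + 1 := by exact_mod_cast hk
  push_cast
  nlinarith [hlt, hk2]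
end

section
/- Suppose m and q are integers with m ≥ 2√|q| + 5, t := z − y ∈ (1, 3/2) where y = (1/2)√(2m²−10m−8q+9) and z = (1/2)√(2m²−2m−8q+1), and the fractional part {y} lies in [0, 3/2 − t) ∪ [1/2, 1). Then ⌊5/2 + y⌋ > ⌊1/2 + z⌋. -/
theorem floor_gt_of_fract_in_good_range (m q : ℤ) (y z : ℝ)
    (hm : (m : ℝ) ≥ 2 * Real.sqrt |(q : ℝ)| + 5)
    (hy : y = Real.sqrt (2 * (m : ℝ) ^ 2 - 10 * m - 8 * q + 9) / 2)
    (hz : z = Real.sqrt (2 * (m : ℝ) ^ 2 - 2 * m - 8 * q + 1) / 2)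
    (ht : z - y ∈ Set.Ioo (1 : ℝ) (3 / 2))
    (hfrac : Int.fract y ∈ Set.Ico (0 : ℝ) (3 / 2 - (z - y)) ∪ Set.Ico (1 / 2 : ℝ) 1) :
    ⌊(5 : ℝ) / 2 + y⌋ > ⌊(1 : ℝ) / 2 + z⌋ := by
  obtain ⟨ht1, ht2⟩ := ht
  have hyf : y = (⌊y⌋ : ℝ) + Int.fract y := (Int.floor_add_fract y).symm
  have e1 : (5 : ℝ) / 2 + y = (⌊y⌋ : ℝ) + (5 / 2 + Int.fract y) := by
    linarith [hyf]
  have e2 : (1 : ℝ) / 2 + z = (⌊y⌋ : ℝ) + (1 / 2 + Int.fract y + (z - y)) := by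
    linarith [hyf]
  rw [e1, e2, Int.floor_intCast_add, Int.floor_intCast_add]
  have hf0 := Int.fract_nonneg y
  have hf1 := Int.fract_lt_one y
  have key : ⌊(1 : ℝ) / 2 + Int.fract y + (z - y)⌋ < ⌊(5 : ℝ) / 2 + Int.fract y⌋ := by
    rcases hfrac with ⟨_, hlt⟩ | ⟨hge, _⟩
    · calc ⌊(1 : ℝ) / 2 + Int.fract y + (z - y)⌋ < 2 := by
            rw [Int.floor_lt]; push_cast; linarith
        _ ≤ ⌊(5 : ℝ) / 2 + Int.fract y⌋ := by
            rw [Int.le_floor]; push_cast; linarith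
    · calc ⌊(1 : ℝ) / 2 + Int.fract y + (z - y)⌋ < 3 := by
            rw [Int.floor_lt]; push_cast; linarith
        _ ≤ ⌊(5 : ℝ) / 2 + Int.fract y⌋ := by
            rw [Int.le_floor]; push_cast; linarith
  omega
end

section
/- Let m, q be integers with m ≥ 2√|q| + 5 and f = m(m−1)/4 − q (assumed an integer). If a graph G on m vertices with f edges is the vertex-disjoint union of a clique on x vertices and a forest on m − x vertices, then x ≥ ⌊(3 + √(2m²−10m−8q+9))/2⌋ + 1. -/
open SimpleGraph

lemma my_edge_split {V : Type} [Fintype V] (G : SimpleGraph V) (s : Set V)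
    (hsep : ∀ v ∈ s, ∀ w ∉ s, ¬ G.Adj v w) :
    G.edgeSet.ncard = (G.induce s).edgeSet.ncard + (G.induce sᶜ).edgeSet.ncard := by
  classical
  have himg : G.edgeSet = (Sym2.map (Subtype.val : s → V)) '' (G.induce s).edgeSet ∪
      (Sym2.map (Subtype.val : ↥sᶜ → V)) '' (G.induce sᶜ).edgeSet := by
    ext e
    refine Sym2.ind (fun a b => ?_) e
    simp only [Set.mem_union, Set.mem_image, mem_edgeSet]
    constructor
    · intro hab
      by_cases ha : a ∈ s
      · have hb : b ∈ s := by by_contra hb; exact hsep a ha b hb hab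
        exact Or.inl ⟨s(⟨a, ha⟩, ⟨b, hb⟩), hab, rfl⟩
      · have hb : b ∉ s := fun hb => hsep b hb a ha hab.symm
        exact Or.inr ⟨s(⟨a, ha⟩, ⟨b, hb⟩), hab, rfl⟩
    · rintro (⟨e', he', heq⟩ | ⟨e', he', heq⟩) <;>
      · revert he' heq
        refine Sym2.ind (fun u v h1 h2 => ?_) e'
        rw [Sym2.map_pair_eq, Sym2.eq_iff] at h2
        rcases h2 with ⟨rfl, rfl⟩ | ⟨rfl, rfl⟩
        · exact h1
        · exact h1.symm
  rw [himg, Set.ncard_union_eq ?_ (Set.toFinite _) (Set.toFinite _),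
    Set.ncard_image_of_injective _ (Sym2.map.injective Subtype.val_injective),
    Set.ncard_image_of_injective _ (Sym2.map.injective Subtype.val_injective)]
  rw [Set.disjoint_left]
  rintro e ⟨e1, he1, rfl⟩ ⟨e2, he2, heq⟩
  revert he2 heq
  refine Sym2.ind (fun u v _ h2 => ?_) e2
  revert h2
  refine Sym2.ind (fun a b h2 => ?_) e1
  rw [Sym2.map_pair_eq, Sym2.map_pair_eq, Sym2.eq_iff] at h2
  rcases h2 with ⟨h, _⟩ | ⟨_, h⟩
  · exact u.2 (h ▸ a.2)
  · exact v.2 (h ▸ a.2)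

lemma my_acyclic_induce {V : Type} (G : SimpleGraph V) (s : Set V) (h : G.IsAcyclic) :
    (G.induce s).IsAcyclic := by
  intro v c hc
  exact h (c.map (SimpleGraph.Embedding.induce (G := G) s).toHom)
    (hc.map (SimpleGraph.Embedding.induce (G := G) s).injective)

lemma my_component_connected {V : Type} (G : SimpleGraph V) (c : G.ConnectedComponent) :
    (G.induce c.supp).Connected := by
  classical
  have hne : Nonempty c.supp := by
    refine c.ind (fun w => ?_)
    exact ⟨⟨w, by rw [ConnectedComponent.mem_supp_iff]⟩⟩
  refine ⟨fun u v => ?_⟩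
  obtain ⟨u, hu⟩ := u
  obtain ⟨v, hv⟩ := v
  have hu' := hu
  rw [ConnectedComponent.mem_supp_iff] at hu' hv
  have hr : G.Reachable u v := ConnectedComponent.exact (hu'.trans hv.symm)
  obtain ⟨p⟩ := hr
  have hsub : {x | x ∈ p.support} ⊆ c.supp := by
    intro x hx
    have hrx : G.Reachable u x := ⟨p.takeUntil x hx⟩
    rw [ConnectedComponent.mem_supp_iff, ← hu']
    exact (ConnectedComponent.sound hrx).symm
  have hconn := p.connected_induce_support
  have h1 := hconn ⟨u, p.start_mem_support⟩ ⟨v, p.end_mem_support⟩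
  exact h1.map (SimpleGraph.induceHomOfLE _ hsub).toHom

lemma my_forest_bound : ∀ (n : ℕ) (V : Type) [Fintype V] (G : SimpleGraph V),
    Fintype.card V = n → G.IsAcyclic → G.edgeSet.ncard ≤ n - 1 := by
  intro n
  induction n using Nat.strong_induction_on with
  | _ n ih =>
    intro V _ G hcard hac
    classical
    rcases isEmpty_or_nonempty V with hV | hV
    · have : G.edgeSet = ∅ := Set.eq_empty_of_isEmpty _
      simp [this]
    · set c := G.connectedComponentMk (Classical.arbitrary V) with hc
      set s := c.supp with hs
      have hsep : ∀ v ∈ s, ∀ w ∉ s, ¬ G.Adj v w := by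
        intro v hv w hw hadj
        apply hw
        rw [ConnectedComponent.mem_supp_iff] at hv ⊢
        rw [← hv]
        exact ConnectedComponent.sound hadj.symm.reachable
      have hsplit := my_edge_split G s hsep
      have htree : (G.induce s).IsTree :=
        ⟨my_component_connected G c, my_acyclic_induce G s hac⟩
      have he1 : (G.induce s).edgeSet.ncard + 1 = Fintype.card s := by
        have h := htree.card_edgeFinset
        rw [← Set.ncard_coe_finset (G.induce s).edgeFinset, coe_edgeFinset] at h
        exact h
      have hs1 : 1 ≤ Fintype.card s :=
        Fintype.card_pos_iff.mpr
          ⟨⟨Classical.arbitrary V, by rw [hs, ConnectedComponent.mem_supp_iff]⟩⟩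
      have hcompl : Fintype.card ↥(sᶜ) = n - Fintype.card s := by
        rw [← hcard]
        exact Fintype.card_compl_set s
      have hsn : Fintype.card s ≤ n := by
        rw [← hcard]; exact Fintype.card_le_of_injective _ Subtype.val_injective
      have hlt : Fintype.card ↥(sᶜ) < n := by omega
      have he2 := ih _ hlt ↥(sᶜ) (G.induce sᶜ) rfl (my_acyclic_induce G sᶜ hac)
      omega

theorem clique_lower_bound (m : ℕ) (q : ℤ) (f : ℕ)
    (hm : (m : ℝ) ≥ 2 * Real.sqrt |(q : ℝ)| + 5)
    (hf : 4 * (f : ℤ) = m * (m - 1) - 4 * q)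
    (G : SimpleGraph (Fin m))
    (hedges : G.edgeSet.ncard = f)
    (S : Finset (Fin m)) (x : ℕ) (hx : S.card = x)
    (hclique : G.IsClique (S : Set (Fin m)))
    (hsep : ∀ v ∈ S, ∀ w ∉ S, ¬ G.Adj v w)
    (hforest : (G.induce ((S : Set (Fin m))ᶜ)).IsAcyclic) :
    (x : ℤ) ≥ ⌊(3 + Real.sqrt (2 * (m : ℝ) ^ 2 - 10 * m - 8 * q + 9)) / 2⌋ + 1 := by
  classical
  -- basic bounds from hm
  have hqabs : (0:ℝ) ≤ Real.sqrt |(q:ℝ)| := Real.sqrt_nonneg _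
  have hm5 : (5:ℕ) ≤ m := by
    have : (5:ℝ) ≤ (m:ℝ) := by linarith
    exact_mod_cast this
  have hq : 4 * |q| ≤ ((m:ℤ) - 5)^2 := by
    have h1 : 2 * Real.sqrt |(q:ℝ)| ≤ (m:ℝ) - 5 := by linarith
    have h2 : (2 * Real.sqrt |(q:ℝ)|)^2 ≤ ((m:ℝ) - 5)^2 := by
      apply pow_le_pow_left₀ (by positivity) h1
    rw [mul_pow, Real.sq_sqrt (abs_nonneg _)] at h2
    have h3 : 4 * |(q:ℝ)| ≤ ((m:ℝ) - 5)^2 := by linarith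
    have h4 : |(q:ℝ)| = ((|q| : ℤ) : ℝ) := by push_cast; rfl
    rw [h4] at h3
    exact_mod_cast h3
  -- counting
  have hxm : x ≤ m := by
    rw [← hx]
    calc S.card ≤ Finset.univ.card := Finset.card_le_univ S
    _ = m := by simp
  have hsep' : ∀ v ∈ (S : Set (Fin m)), ∀ w ∉ (S : Set (Fin m)), ¬ G.Adj v w := by
    intro v hv w hw
    exact hsep v hv w hw
  have hsplit := my_edge_split G (S : Set (Fin m)) hsep'
  have hclq : G.induce (S : Set (Fin m)) = ⊤ := (isClique_iff_induce_eq G).mp hclique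
  have hcardS : Fintype.card ↥(S : Set (Fin m)) = x := by
    rw [← hx]; exact Fintype.card_coe S
  have he1 : (G.induce (S : Set (Fin m))).edgeSet.ncard = x.choose 2 := by
    rw [hclq, ← coe_edgeFinset, Set.ncard_coe_finset,
      card_edgeFinset_top_eq_card_choose_two, hcardS]
  have hcardSc : Fintype.card ↥((S : Set (Fin m))ᶜ) = m - x := by
    rw [Fintype.card_compl_set, hcardS, Fintype.card_fin]
  have he2 : (G.induce ((S : Set (Fin m))ᶜ)).edgeSet.ncard ≤ (m - x) - 1 := by
    have := my_forest_bound (Fintype.card ↥((S : Set (Fin m))ᶜ)) _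
      (G.induce ((S : Set (Fin m))ᶜ)) rfl hforest
    rwa [hcardSc] at this
  have hfeq : f = x.choose 2 + (G.induce ((S : Set (Fin m))ᶜ)).edgeSet.ncard := by
    rw [← hedges, hsplit, he1]
  -- choose identity
  have hch : 2 * x.choose 2 = x * (x - 1) := by
    rw [Nat.choose_two_right, Nat.mul_div_cancel']
    rcases Nat.even_or_odd x with h | h
    · exact Dvd.dvd.mul_right h.two_dvd _
    · rcases x with _ | y
      · simp
      · have hy : Even y := by rcases h with ⟨k, hk⟩; exact ⟨k, by omega⟩
        simpa using Dvd.dvd.mul_left hy.two_dvd _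
  have hchZ : 2 * ((x.choose 2 : ℕ) : ℤ) = (x:ℤ) * ((x:ℤ) - 1) := by
    rcases Nat.eq_zero_or_pos x with rfl | hx1
    · simp
    · have h := hch
      zify [hx1] at h
      linarith
  have hm5' : (5:ℤ) ≤ (m:ℤ) := by exact_mod_cast hm5
  have rq : ((m:ℤ) - 5)^2 = (m:ℤ)*(m:ℤ) - 10*(m:ℤ) + 25 := by ring
  rw [rq] at hq
  have hq1 : q ≤ |q| := le_abs_self q
  have hq2 : -|q| ≤ q := neg_abs_le q
  -- main quadratic inequality
  have hkey : 2 * (m:ℤ)^2 - 10 * m - 8 * q + 9 + 8 ≤ (2 * (x:ℤ) - 3)^2 := by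
    have r1 : (2*(x:ℤ)-3)^2 = 4*((x:ℤ)*(x:ℤ)) - 12*(x:ℤ) + 9 := by ring
    have r2 : (x:ℤ)*((x:ℤ)-1) = (x:ℤ)*(x:ℤ) - (x:ℤ) := by ring
    have r3 : (m:ℤ)*((m:ℤ)-1) = (m:ℤ)*(m:ℤ) - (m:ℤ) := by ring
    have r4 : (2:ℤ) * (m:ℤ)^2 = 2*((m:ℤ)*(m:ℤ)) := by ring
    rcases Nat.lt_or_ge x m with hlt | hge
    · -- m - x ≥ 1
      have hfle' : (f:ℤ) ≤ ((x.choose 2 : ℕ) : ℤ) + (m:ℤ) - (x:ℤ) - 1 := by omega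
      linarith [hf, hchZ, hfle']
    · -- x = m : contradiction with hm
      exfalso
      have hf2Z : (f:ℤ) = ((x.choose 2 : ℕ) : ℤ) := by omega
      have hxZ : (x:ℤ) = (m:ℤ) := by omega
      have e0 : (x:ℤ)*((x:ℤ)-1) = (m:ℤ)*((m:ℤ)-1) := by rw [hxZ]
      linarith [hf, hchZ, hf2Z, e0]
  -- x ≥ 2
  have hDlow : 10*(m:ℤ) - 41 ≤ 2 * (m:ℤ)^2 - 10 * m - 8 * q + 9 := by
    have r4 : (2:ℤ) * (m:ℤ)^2 = 2*((m:ℤ)*(m:ℤ)) := by ring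
    linarith
  have h9 : (17:ℤ) ≤ (2 * (x:ℤ) - 3)^2 := by linarith
  have hx2 : 2 ≤ x := by
    by_contra h
    interval_cases x <;> norm_num at h9
  -- real arithmetic
  rw [ge_iff_le, Int.add_one_le_iff, Int.floor_lt]
  have hint : 2 * (m:ℤ)^2 - 10 * m - 8 * q + 9 < (2 * (x:ℤ) - 3)^2 := by linarith
  have hxpos : (0:ℝ) < 2 * (x:ℝ) - 3 := by
    have : (2:ℝ) ≤ (x:ℝ) := by exact_mod_cast hx2
    linarith
  have hsq : Real.sqrt (2 * (m:ℝ)^2 - 10 * m - 8 * q + 9) < 2 * (x:ℝ) - 3 := by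
    rw [Real.sqrt_lt' hxpos]
    exact_mod_cast hint
  push_cast
  linarith
end

section
/- Let m, q be integers with m ≡ 0 or 1 (mod 4) and m ≥ 2√|q| + 5. If ⌊5/2 + (1/2)√(2m²−10m−8q+9)⌋ > ⌊1/2 + (1/2)√(2m²−2m−8q+1)⌋, then no graph on m vertices with binom(m,2)/2 − q edges is the vertex-disjoint union of a clique and a forest. -/
open SimpleGraph Finset


lemma two_mul_choose_two (c : ℕ) : 2 * c.choose 2 = c * (c - 1) := by
  induction c with
  | zero => rfl
  | succ n ih =>
    cases n with
    | zero => rfl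
    | succ k =>
      rw [Nat.choose_succ_succ, Nat.choose_one_right, Nat.mul_add, ih]
      simp only [Nat.add_sub_cancel]
      ring

lemma acyclic_card_edge {V : Type*} [Fintype V] [DecidableEq V] (G : SimpleGraph V)
    [DecidableRel G.Adj] (hG : G.IsAcyclic) :
    G.edgeFinset.card ≤ Fintype.card V - 1 := by
  classical
  by_cases hV : Nonempty V
  swap
  · have : IsEmpty V := not_nonempty_iff.mp hV
    simp [Finset.eq_empty_of_isEmpty]
  haveI : Inhabited V := Classical.inhabited_of_nonempty hV
  set root : V → V := fun v => Quot.out (G.connectedComponentMk v) with hrootdef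
  have hroot : ∀ v, G.Reachable v (root v) := fun v =>
    (ConnectedComponent.exact (Quot.out_eq (G.connectedComponentMk v))).symm
  have hrr : ∀ v, root (root v) = root v := fun v =>
    congrArg Quot.out (Quot.out_eq (G.connectedComponentMk v))
  set p : ∀ v, G.Path v (root v) := fun v => ((hroot v).some).toPath with hpdef
  -- a closed path has length zero
  have hlen : ∀ (u : V) (w : G.Walk u u), w.IsPath → w.length = 0 := by
    intro u w hw
    cases w with
    | nil => rfl
    | cons h q =>
      rw [Walk.cons_isPath_iff] at hw
      exact absurd (q.end_mem_support) hw.2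
  -- a vertex whose chosen path has an edge is not its own root
  have hne : ∀ v : V, ((p v : G.Walk v (root v)).edges ≠ []) → v ≠ root v := by
    intro v hv hvr
    have h0 : ((p v : G.Walk v (root v)).copy rfl hvr.symm).length = 0 :=
      hlen v _ ((Walk.isPath_copy _ _ _).mpr (p v).2)
    rw [Walk.length_copy] at h0
    have := (p v : G.Walk v (root v)).length_edges
    rw [h0, List.length_eq_zero_iff] at this
    exact hv this
  have key : ∀ ⦃u v : V⦄, G.Adj u v →
      ∃ w, w ≠ root w ∧ ((p w : G.Walk w (root w)).edges).headI = s(u, v) := by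
    intro u v h
    have hru : root u = root v :=
      congrArg Quot.out (ConnectedComponent.connectedComponentMk_eq_of_adj h)
    by_cases hus : u ∈ (p v : G.Walk v (root v)).support
    · -- first edge of p v is s(v,u)
      set w : G.Walk v (root v) := (p v : G.Walk v (root v)) with hwdef
      have ht : (w.takeUntil u hus).IsPath := (p v).2.takeUntil hus
      have hsing : (⟨w.takeUntil u hus, ht⟩ : G.Path v u) = SimpleGraph.Path.singleton h.symm :=
        hG.path_unique _ _
      have he : w.takeUntil u hus = Walk.cons h.symm Walk.nil := congrArg Subtype.val hsing
      have hedges : w.edges = (w.takeUntil u hus).edges ++ (w.dropUntil u hus).edges := by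
        conv_lhs => rw [← Walk.take_spec w hus]
        rw [Walk.edges_append]
      refine ⟨v, ?_, ?_⟩
      · apply hne
        rw [hedges, he]
        simp
      · rw [hedges, he]
        simp [Sym2.eq_swap]
    · have hp' : (Walk.cons h (p v : G.Walk v (root v))).IsPath := (p v).2.cons hus
      have hw' : ((Walk.cons h (p v : G.Walk v (root v))).copy rfl hru.symm).IsPath :=
        (Walk.isPath_copy _ _ _).mpr hp'
      have hpu : p u = ⟨(Walk.cons h (p v : G.Walk v (root v))).copy rfl hru.symm, hw'⟩ :=
        hG.path_unique _ _
      refine ⟨u, ?_, ?_⟩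
      · apply hne
        rw [hpu]
        simp [Walk.edges_copy]
      · rw [hpu]
        simp [Walk.edges_copy]
  -- counting
  have hsub : G.edgeFinset ⊆
      (Finset.univ.filter fun v => v ≠ root v).image
        (fun v => ((p v : G.Walk v (root v)).edges).headI) := by
    intro e he
    induction e with
    | _ a b =>
      rw [mem_edgeFinset, mem_edgeSet] at he
      obtain ⟨w, hw1, hw2⟩ := key he
      exact Finset.mem_image.mpr ⟨w, Finset.mem_filter.mpr ⟨Finset.mem_univ _, hw1⟩, hw2⟩
  have hsub2 : (Finset.univ.filter fun v => v ≠ root v) ⊆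
      Finset.univ.erase (root default) := by
    intro v hv
    rw [Finset.mem_filter] at hv
    refine Finset.mem_erase.mpr ⟨?_, Finset.mem_univ _⟩
    intro hvr
    exact hv.2 (by rw [hvr, hrr])
  calc G.edgeFinset.card ≤ _ := Finset.card_le_card hsub
    _ ≤ (Finset.univ.filter fun v => v ≠ root v).card := Finset.card_image_le
    _ ≤ (Finset.univ.erase (root default)).card := Finset.card_le_card hsub2
    _ = Fintype.card V - 1 := by rw [Finset.card_erase_of_mem (Finset.mem_univ _), Finset.card_univ]

lemma card_eq_induce {V : Type*} [Fintype V] [DecidableEq V] (G : SimpleGraph V)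
    [DecidableRel G.Adj] (s : Set V) [DecidablePred (· ∈ s)] [Fintype (G.induce s).edgeSet]
    (A : Finset (Sym2 V)) (hA : ∀ e, e ∈ A ↔ e ∈ G.edgeSet ∧ ∀ x ∈ e, x ∈ s) :
    A.card = (G.induce s).edgeFinset.card := by
  classical
  symm
  apply Finset.card_bij (fun e _ => Sym2.map Subtype.val e)
  · intro e he
    induction e with
    | _ a b =>
      rw [mem_edgeFinset, mem_edgeSet] at he
      rw [Sym2.map_pair_eq, hA, mem_edgeSet]
      refine ⟨he, ?_⟩
      intro x hx
      rw [Sym2.mem_iff] at hx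
      rcases hx with rfl | rfl
      · exact a.2
      · exact b.2
  · intro e₁ _ e₂ _ h
    exact Sym2.map.injective Subtype.val_injective h
  · intro e he
    induction e with
    | _ a b =>
      rw [hA, mem_edgeSet] at he
      have ha : a ∈ s := he.2 a (Sym2.mem_mk_left a b)
      have hb : b ∈ s := he.2 b (Sym2.mem_mk_right a b)
      refine ⟨s(⟨a, ha⟩, ⟨b, hb⟩), ?_, ?_⟩
      · rw [mem_edgeFinset, mem_edgeSet]
        exact he.1
      · rw [Sym2.map_pair_eq]

set_option maxHeartbeats 1600000 in
theorem no_clique_plus_forest (m : ℕ) (q : ℤ) (f : ℕ)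
    (hmod : m % 4 = 0 ∨ m % 4 = 1)
    (hm : (m : ℝ) ≥ 2 * Real.sqrt |(q : ℝ)| + 5)
    (hf : 4 * (f : ℤ) = m * (m - 1) - 4 * q)
    (hLR : ⌊(5 : ℝ) / 2 + Real.sqrt (2 * (m : ℝ) ^ 2 - 10 * m - 8 * q + 9) / 2⌋ >
      ⌊(1 : ℝ) / 2 + Real.sqrt (2 * (m : ℝ) ^ 2 - 2 * m - 8 * q + 1) / 2⌋) :
    ¬ ∃ (G : SimpleGraph (Fin m)) (S : Finset (Fin m)),
        G.edgeSet.ncard = f ∧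
        G.IsClique (S : Set (Fin m)) ∧
        (∀ v ∈ S, ∀ w ∉ S, ¬ G.Adj v w) ∧
        (G.induce ((S : Set (Fin m))ᶜ)).IsAcyclic := by
  classical
  rintro ⟨G, S, hcard, hclique, hsep, hforest⟩
  set c := S.card with hc
  -- basic real facts
  have hm5R : (5 : ℝ) ≤ m := by
    have := Real.sqrt_nonneg |(q:ℝ)|
    linarith
  have hm5 : 5 ≤ m := by exact_mod_cast hm5R
  have hq2 : 4 * |(q:ℝ)| ≤ ((m:ℝ) - 5)^2 := by
    nlinarith [Real.sq_sqrt (abs_nonneg (q:ℝ)), Real.sqrt_nonneg |(q:ℝ)|]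
  have hfR : 4 * (f:ℝ) = (m:ℝ)^2 - m - 4*q := by
    have h := congrArg (fun z : ℤ => (z : ℝ)) hf
    push_cast at h
    nlinarith [h]
  -- edge partition
  set A := G.edgeFinset.filter (fun e => ∀ x ∈ e, x ∈ (S : Set (Fin m))) with hA
  set B := G.edgeFinset.filter (fun e => ∀ x ∈ e, x ∈ ((S : Set (Fin m))ᶜ)) with hB
  have hunion : G.edgeFinset = A ∪ B := by
    apply Finset.Subset.antisymm
    · intro e he
      induction e with
      | _ a b =>
        have hadj : G.Adj a b := by rwa [mem_edgeFinset, mem_edgeSet] at he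
        by_cases ha : a ∈ S
        · have hb : b ∈ S := by
            by_contra hb
            exact hsep a ha b hb hadj
          refine Finset.mem_union_left _ (Finset.mem_filter.mpr ⟨he, ?_⟩)
          intro x hx
          rw [Sym2.mem_iff] at hx
          rcases hx with rfl | rfl <;> simpa
        · have hb : b ∉ S := by
            intro hb
            exact hsep b hb a ha hadj.symm
          refine Finset.mem_union_right _ (Finset.mem_filter.mpr ⟨he, ?_⟩)
          intro x hx
          rw [Sym2.mem_iff] at hx
          rcases hx with rfl | rfl <;> simpa
    · exact Finset.union_subset (Finset.filter_subset _ _) (Finset.filter_subset _ _)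
  have hdisj : Disjoint A B := by
    rw [Finset.disjoint_left]
    intro e heA heB
    induction e with
    | _ a b =>
      have h1 := (Finset.mem_filter.mp heA).2 a (Sym2.mem_mk_left a b)
      have h2 := (Finset.mem_filter.mp heB).2 a (Sym2.mem_mk_left a b)
      exact h2 h1
  have hfcard : f = A.card + B.card := by
    rw [← Finset.card_union_of_disjoint hdisj, ← hunion, ← hcard, ← Set.ncard_coe_finset, SimpleGraph.coe_edgeFinset]
  -- A.card
  have hindS : G.induce (S : Set (Fin m)) = ⊤ := by
    ext ⟨a, ha⟩ ⟨b, hb⟩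
    simp only [comap_adj, Function.Embedding.coe_subtype, top_adj, ne_eq, Subtype.mk.injEq]
    constructor
    · exact fun h => h.ne
    · exact fun h => hclique ha hb (by simpa using h)
  have hAmem : ∀ e, e ∈ A ↔ e ∈ G.edgeSet ∧ ∀ x ∈ e, x ∈ (S : Set (Fin m)) := by
    intro e
    rw [hA, Finset.mem_filter, mem_edgeFinset]
  have hBmem : ∀ e, e ∈ B ↔ e ∈ G.edgeSet ∧ ∀ x ∈ e, x ∈ ((S : Set (Fin m))ᶜ) := by
    intro e
    rw [hB, Finset.mem_filter, mem_edgeFinset]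
  have hAcard : A.card = c.choose 2 := by
    have hsame : (G.induce (S : Set (Fin m))).edgeFinset = (⊤ : SimpleGraph _).edgeFinset := by
      ext e
      rw [mem_edgeFinset, mem_edgeFinset, hindS]
    rw [card_eq_induce G _ A hAmem, hsame, SimpleGraph.card_edgeFinset_top_eq_card_choose_two]
    congr 1
    simp [hc]
  -- B.card
  have hBcard : B.card ≤ (m - c) - 1 := by
    have h2 := acyclic_card_edge _ hforest
    have h3 : Fintype.card ((S : Set (Fin m))ᶜ : Set (Fin m)) = m - c := by
      rw [← Set.toFinset_card]
      simp [Finset.card_compl, hc]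
    rw [h3] at h2
    rw [card_eq_induce G _ B hBmem]
    exact h2
  have hcm : c ≤ m := by simpa using Finset.card_le_univ S
  by_cases hc1 : c ≤ 1
  · -- tiny clique: f would be too small
    have hA0 : A.card = 0 := by
      rw [hAcard]
      exact Nat.choose_eq_zero_of_lt (by omega)
    have hfge : (m : ℝ) ≤ (f : ℝ) := by
      nlinarith [hq2, hfR, le_abs_self (q : ℝ), hm5R]
    have hmf : m ≤ f := by exact_mod_cast hfge
    omega
  by_cases hcm' : c = m
  · -- the clique is everything
    have h2f : 2 * f = c * (c - 1) := by
      have h := two_mul_choose_two c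
      omega
    have h2fR : 2 * (f : ℝ) = (m : ℝ) * ((m : ℝ) - 1) := by
      rw [hcm'] at h2f
      have h := congrArg (fun n : ℕ => (n : ℝ)) h2f
      push_cast [Nat.cast_sub (by omega : 1 ≤ m)] at h
      linarith
    nlinarith [hq2, hfR, neg_abs_le (q : ℝ), hm5R, h2fR]
  -- main case : 2 ≤ c < m
  have hc2 : 2 ≤ c := by omega
  have hclt : c < m := by omega
  have hc2R : (2 : ℝ) ≤ (c : ℝ) := by exact_mod_cast hc2
  have h2A : 2 * A.card = c * (c - 1) := by rw [hAcard]; exact two_mul_choose_two c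
  have h2AR : 2 * (A.card : ℝ) = (c : ℝ) * ((c : ℝ) - 1) := by
    have h := congrArg (fun n : ℕ => (n : ℝ)) h2A
    push_cast [Nat.cast_sub (by omega : 1 ≤ c)] at h
    linarith
  have hAf : (A.card : ℝ) ≤ (f : ℝ) := by
    exact_mod_cast (show A.card ≤ f by omega)
  have hlow : (c : ℝ) * ((c : ℝ) - 1) ≤ 2 * (f : ℝ) := by linarith
  have hhighN : 2 * f + 2 * c + 2 ≤ 2 * A.card + 2 * m := by omega
  have hhigh : 8 * (f : ℝ) + 8 * (c : ℝ) + 8 ≤ 4 * ((c : ℝ) * ((c : ℝ) - 1)) + 8 * (m : ℝ) := by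
    have h : ((2 * f + 2 * c + 2 : ℕ) : ℝ) ≤ ((2 * A.card + 2 * m : ℕ) : ℝ) := by
      exact_mod_cast hhighN
    push_cast at h
    linarith
  have hsq1 : 2 * (c : ℝ) - 1 ≤ Real.sqrt (2 * (m : ℝ) ^ 2 - 2 * m - 8 * q + 1) := by
    rw [show (2 * (m : ℝ) ^ 2 - 2 * m - 8 * q + 1) = 8 * (f : ℝ) + 1 by linarith]
    rw [Real.le_sqrt (by linarith) (by positivity)]
    nlinarith
  have hR : (c : ℤ) ≤ ⌊(1 : ℝ) / 2 + Real.sqrt (2 * (m : ℝ) ^ 2 - 2 * m - 8 * q + 1) / 2⌋ := by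
    rw [Int.le_floor]
    push_cast
    linarith
  have hsq0 : Real.sqrt (2 * (m : ℝ) ^ 2 - 10 * m - 8 * q + 9) < 2 * (c : ℝ) - 3 := by
    rw [Real.sqrt_lt' (by linarith)]
    nlinarith
  have hL : ⌊(5 : ℝ) / 2 + Real.sqrt (2 * (m : ℝ) ^ 2 - 10 * m - 8 * q + 9) / 2⌋ < (c : ℤ) + 1 := by
    rw [Int.floor_lt]
    push_cast
    linarith
  omega
end

section
/- For every positive integer m and every nonnegative integer f with f ≤ ⌊m²/2⌋, there exists a bipartite graph with parts of size m and m, exactly f edges, which is the vertex-disjoint union of a complete bipartite graph and a forest. -/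
open SimpleGraph Finset

section
variable (m x y r : ℕ)

def bipCond (a b : ℕ) : Prop := (a < x ∧ b < y) ∨ (a = x ∧ y ≤ b ∧ b < y + r)

instance : ∀ a b, Decidable (bipCond x y r a b) := fun a b => by
  unfold bipCond; infer_instance

def bipRel (u v : Fin m ⊕ Fin m) : Prop :=
  ∃ i j : Fin m, u = Sum.inl i ∧ v = Sum.inr j ∧ bipCond x y r i.val j.val

end

lemma star_acyclic {V : Type*} (G : SimpleGraph V) (Q : V → Prop)
    (hQ : ∀ a b, Q a → Q b → a = b)
    (h : ∀ a b, G.Adj a b → (Q a ∧ ¬ Q b) ∨ (Q b ∧ ¬ Q a)) : G.IsAcyclic := by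
  intro v p hp
  match p with
  | .nil => exact hp.ne_nil rfl
  | .cons h1 .nil => exact G.irrefl h1
  | .cons' v u1 _ h1 (.cons' _ u2 _ h2 p'') =>
    have hlen := hp.three_le_length
    have hnd : (u1 :: p''.support).Nodup := by
      simpa [SimpleGraph.Walk.support_cons] using hp.support_nodup
    rcases h _ _ h1 with ⟨hQv, hnu1⟩ | ⟨hQu1, hnv⟩
    · rcases h _ _ h2 with ⟨hq, _⟩ | ⟨hQu2, _⟩
      · exact hnu1 hq
      · have hvu2 : v = u2 := hQ _ _ hQv hQu2
        cases p'' with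
        | nil => simp [SimpleGraph.Walk.length_cons] at hlen
        | @cons _ u3 _ h3 q =>
          have : u2 ∉ q.support := by
            simp only [SimpleGraph.Walk.support_cons, List.nodup_cons] at hnd
            exact hnd.2.1
          exact this (hvu2 ▸ q.end_mem_support)
    · have hnu2 : ¬ Q u2 := by
        rcases h _ _ h2 with ⟨_, h'⟩ | ⟨_, h'⟩
        · exact h'
        · exact absurd hQu1 h'
      cases p'' with
      | nil => simp [SimpleGraph.Walk.length_cons] at hlen
      | @cons _ u3 _ h3 q =>
        have hQu3 : Q u3 := by
          rcases h _ _ h3 with ⟨h', _⟩ | ⟨h', _⟩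
          · exact absurd h' hnu2
          · exact h'
        have h31 : u3 = u1 := hQ _ _ hQu3 hQu1
        have : u1 ∉ (SimpleGraph.Walk.cons h3 q).support := by
          simp only [List.nodup_cons] at hnd
          exact hnd.1
        apply this
        rw [SimpleGraph.Walk.support_cons]
        exact List.mem_cons_of_mem _ (h31 ▸ q.start_mem_support)

lemma bip_count (m x y r : ℕ) (hxm : x ≤ m) (hyr : y + r ≤ m)
    (hx' : r ≠ 0 → x < m) :
    {q : Fin m × Fin m | bipCond x y r q.1.val q.2.val}.ncard = x * y + r := by
  classical
  have h1 : {q : Fin m × Fin m | bipCond x y r q.1.val q.2.val} =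
      ↑(Finset.univ.filter fun q : Fin m × Fin m => bipCond x y r q.1.val q.2.val) := by
    ext q; simp
  rw [h1, Set.ncard_coe_finset]
  set Tf : Finset (ℕ × ℕ) :=
    (Finset.range x ×ˢ Finset.range y) ∪ ({x} ×ˢ Finset.Ico y (y + r)) with hTf
  have hcard : Tf.card = x * y + r := by
    rw [Finset.card_union_of_disjoint, Finset.card_product, Finset.card_product]
    · simp
    · rw [Finset.disjoint_left]
      rintro ⟨a, b⟩ hab hab'
      simp only [Finset.mem_product, Finset.mem_range, Finset.mem_singleton,
        Finset.mem_Ico, hTf] at hab hab'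
      omega
  rw [← hcard]
  apply Finset.card_bij (fun q _ => (q.1.val, q.2.val))
  · rintro ⟨a, b⟩ hab
    simp only [Finset.mem_filter, Finset.mem_univ, true_and] at hab
    simp only [hTf, Finset.mem_union, Finset.mem_product, Finset.mem_range,
      Finset.mem_singleton, Finset.mem_Ico]
    rcases hab with ⟨h1, h2⟩ | ⟨h1, h2⟩
    · exact Or.inl ⟨h1, h2⟩
    · exact Or.inr ⟨h1, h2⟩
  · rintro ⟨a, b⟩ _ ⟨c, d⟩ _ h
    simp only [Prod.mk.injEq] at h
    exact Prod.ext (Fin.ext h.1) (Fin.ext h.2)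
  · rintro ⟨a, b⟩ hab
    simp only [hTf, Finset.mem_union, Finset.mem_product, Finset.mem_range,
      Finset.mem_singleton, Finset.mem_Ico] at hab
    have ham : a < m := by rcases hab with ⟨h1, _⟩ | ⟨h1, h2⟩; · omega
                           · exact h1 ▸ hx' (by omega)
    have hbm : b < m := by omega
    refine ⟨(⟨a, ham⟩, ⟨b, hbm⟩), ?_, rfl⟩
    simp only [Finset.mem_filter, Finset.mem_univ, true_and]
    simp only [Finset.mem_filter, Finset.mem_univ, true_and, bipCond]
    rcases hab with ⟨h1, h2⟩ | ⟨h1, h2⟩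
    · exact Or.inl ⟨h1, h2⟩
    · exact Or.inr ⟨h1, h2⟩

lemma bip_edgeSet_ncard (m x y r : ℕ) (hxm : x ≤ m) (hyr : y + r ≤ m)
    (hx' : r ≠ 0 → x < m) :
    (SimpleGraph.fromRel (bipRel m x y r)).edgeSet.ncard = x * y + r := by
  classical
  set H := SimpleGraph.fromRel (bipRel m x y r) with hH
  have hEdge : H.edgeSet =
      (fun q : Fin m × Fin m => s(Sum.inl q.1, Sum.inr q.2)) ''
        {q : Fin m × Fin m | bipCond x y r q.1.val q.2.val} := by
    ext e
    induction e with
    | _ u v =>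
      simp only [SimpleGraph.mem_edgeSet, hH, SimpleGraph.fromRel_adj, Set.mem_image,
        Set.mem_setOf_eq]
      constructor
      · rintro ⟨hne, h | h⟩
        · obtain ⟨i, j, rfl, rfl, hc⟩ := h
          exact ⟨(i, j), hc, rfl⟩
        · obtain ⟨i, j, rfl, rfl, hc⟩ := h
          exact ⟨(i, j), hc, Sym2.eq_swap⟩
      · rintro ⟨⟨i, j⟩, hc, he⟩
        rw [Sym2.eq_iff] at he
        rcases he with ⟨rfl, rfl⟩ | ⟨h1, h2⟩
        · exact ⟨by simp, Or.inl ⟨i, j, rfl, rfl, hc⟩⟩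
        · subst h1; subst h2
          exact ⟨by simp, Or.inr ⟨i, j, rfl, rfl, hc⟩⟩
  rw [hEdge, Set.ncard_image_of_injective _ ?_, bip_count m x y r hxm hyr hx']
  rintro ⟨a, b⟩ ⟨c, d⟩ h
  simp only [Sym2.eq_iff] at h
  rcases h with ⟨h1, h2⟩ | ⟨h1, h2⟩
  · simp only [Sum.inl.injEq, Sum.inr.injEq] at h1 h2
    exact Prod.ext h1 h2
  · exact absurd h1 (by simp)

theorem bipartite_realizable_as_biclique_plus_forest (m f : ℕ) (hm : 0 < m)
    (hf : f ≤ m ^ 2 / 2) :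
    ∃ (H : SimpleGraph (Fin m ⊕ Fin m)) (S : Set (Fin m ⊕ Fin m)),
      (∀ u v, H.Adj u v → u.isLeft ≠ v.isLeft) ∧
      H.edgeSet.ncard = f ∧
      (∀ u ∈ S, ∀ v ∈ S, H.Adj u v ↔ u.isLeft ≠ v.isLeft) ∧
      (∀ u ∈ S, ∀ v ∉ S, ¬ H.Adj u v) ∧
      (H.induce Sᶜ).IsAcyclic := by
  classical
  set y := (m + 1) / 2 with hy
  set x := f / y with hx
  set r := f % y with hr
  have hy0 : 0 < y := by omega
  have hym : y ≤ m := by omega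
  have h2y : 2 * y ≤ m + 1 := by omega
  have hm2y : m ≤ 2 * y := by omega
  have hfm : f ≤ m * y := by
    have h2 : m ^ 2 ≤ 2 * (m * y) + 1 := by nlinarith
    have h3 : f ≤ m ^ 2 / 2 := hf
    omega
  have hxyr : x * y + r = f := by
    rw [hx, hr]
    exact Nat.div_add_mod' f y
  have hrly : r < y := Nat.mod_lt f hy0
  have hxyf : x * y ≤ f := Nat.div_mul_le_self f y
  have hxm : x ≤ m := by
    by_contra hc
    push_neg at hc
    have : (m + 1) * y ≤ x * y := Nat.mul_le_mul_right y hc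
    nlinarith
  have hyr : y + r ≤ m := by omega
  have hx' : r ≠ 0 → x < m := by
    intro hr0
    rcases Nat.lt_or_ge x m with h | h
    · exact h
    · exfalso
      have hxm' : x = m := le_antisymm hxm h
      have hxy : x * y = m * y := by rw [hxm']
      omega
  set H := SimpleGraph.fromRel (bipRel m x y r) with hH
  set S : Set (Fin m ⊕ Fin m) :=
    {u | Sum.elim (fun i : Fin m => (i : ℕ) < x) (fun j : Fin m => (j : ℕ) < y) u} with hS
  have hshape : ∀ u v, H.Adj u v → ∃ i j : Fin m, bipCond x y r i.val j.val ∧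
      ((u = Sum.inl i ∧ v = Sum.inr j) ∨ (u = Sum.inr j ∧ v = Sum.inl i)) := by
    intro u v huv
    rw [hH, SimpleGraph.fromRel_adj] at huv
    rcases huv.2 with ⟨i, j, rfl, rfl, hc⟩ | ⟨i, j, rfl, rfl, hc⟩
    · exact ⟨i, j, hc, Or.inl ⟨rfl, rfl⟩⟩
    · exact ⟨i, j, hc, Or.inr ⟨rfl, rfl⟩⟩
  refine ⟨H, S, ?_, ?_, ?_, ?_, ?_⟩
  · intro u v huv
    obtain ⟨i, j, _, ⟨rfl, rfl⟩ | ⟨rfl, rfl⟩⟩ := hshape u v huv <;> simp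
  · rw [hH, bip_edgeSet_ncard m x y r hxm hyr hx', hxyr]
  · intro u hu v hv
    constructor
    · intro huv
      obtain ⟨i, j, _, ⟨rfl, rfl⟩ | ⟨rfl, rfl⟩⟩ := hshape u v huv <;> simp
    · rcases u with i | j <;> rcases v with i' | j' <;> simp only [hS, Set.mem_setOf_eq,
        Sum.elim_inl, Sum.elim_inr] at hu hv <;> intro hne
      · simp at hne
      · rw [hH, SimpleGraph.fromRel_adj]
        exact ⟨by simp, Or.inl ⟨i, j', rfl, rfl, Or.inl ⟨hu, hv⟩⟩⟩
      · rw [hH, SimpleGraph.fromRel_adj]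
        exact ⟨by simp, Or.inr ⟨i', j, rfl, rfl, Or.inl ⟨hv, hu⟩⟩⟩
      · simp at hne
  · intro u hu v hv huv
    obtain ⟨i, j, hc, ⟨rfl, rfl⟩ | ⟨rfl, rfl⟩⟩ := hshape u v huv
    · simp only [hS, Set.mem_setOf_eq, Sum.elim_inl, Sum.elim_inr] at hu hv
      rcases hc with ⟨h1, h2⟩ | ⟨h1, h2⟩ <;> omega
    · simp only [hS, Set.mem_setOf_eq, Sum.elim_inl, Sum.elim_inr] at hu hv
      rcases hc with ⟨h1, h2⟩ | ⟨h1, h2⟩ <;> omega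
  · apply star_acyclic _ (fun a : ↥Sᶜ => ∃ i : Fin m, a.val = Sum.inl i ∧ i.val = x)
    · rintro ⟨a, ha⟩ ⟨b, hb⟩ ⟨i, hi, hix⟩ ⟨i', hi', hix'⟩
      apply Subtype.ext
      show a = b
      rw [show a = Sum.inl i from hi, show b = Sum.inl i' from hi']
      exact congrArg Sum.inl (Fin.ext (hix.trans hix'.symm))
    · rintro ⟨a, ha⟩ ⟨b, hb⟩ hab
      have hab' : H.Adj a b := hab
      obtain ⟨i, j, hc, ⟨rfl, rfl⟩ | ⟨rfl, rfl⟩⟩ := hshape _ _ hab'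
      · simp only [hS, Set.mem_compl_iff, Set.mem_setOf_eq, Sum.elim_inl, Sum.elim_inr,
          not_lt] at ha hb
        have hix : i.val = x := by rcases hc with ⟨h1, _⟩ | ⟨h1, _⟩ <;> omega
        exact Or.inl ⟨⟨i, rfl, hix⟩, by rintro ⟨i', hi', -⟩; exact absurd hi' (by simp)⟩
      · simp only [hS, Set.mem_compl_iff, Set.mem_setOf_eq, Sum.elim_inl, Sum.elim_inr,
          not_lt] at ha hb
        have hix : i.val = x := by rcases hc with ⟨h1, _⟩ | ⟨h1, _⟩ <;> omega
        exact Or.inr ⟨⟨i, rfl, hix⟩, by rintro ⟨i', hi', -⟩; exact absurd hi' (by simp)⟩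
end

section
/- If α is irrational, then the sequence (αn mod 1) is equidistributed in [0,1): for all 0 ≤ s < t ≤ 1, the proportion of n ≤ N with fractional part of αn in [s,t) tends to t − s as N → ∞. -/
open Filter
open scoped Classical

open MeasureTheory Set
open scoped Real

namespace WeylEquidistAux

local instance : Fact ((0:ℝ) < 1) := ⟨one_pos⟩

noncomputable def pt (α : ℝ) (n : ℕ) : AddCircle (1:ℝ) := ((α * n : ℝ) : AddCircle (1:ℝ))

/-- averaging operator -/
noncomputable def avg (α : ℝ) (f : AddCircle (1:ℝ) → ℂ) (N : ℕ) : ℂ :=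
  (N : ℂ)⁻¹ * ∑ n ∈ Finset.Icc 1 N, f (pt α n)

lemma contMap_integrable (f : C(AddCircle (1:ℝ), ℂ)) : Integrable f (volume) :=
  f.continuous.integrable_of_hasCompactSupport
    (HasCompactSupport.of_compactSpace f)

lemma norm_avg_sub_le (α : ℝ) (f g : C(AddCircle (1:ℝ), ℂ)) (N : ℕ) :
    ‖avg α f N - avg α g N‖ ≤ ‖f - g‖ := by
  have : avg α f N - avg α g N = (N : ℂ)⁻¹ * ∑ n ∈ Finset.Icc 1 N, (f (pt α n) - g (pt α n)) := by
    simp [avg, Finset.sum_sub_distrib, mul_sub]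
  rw [this]
  rcases Nat.eq_zero_or_pos N with h | h
  · simp [h]
  · rw [norm_mul]
    have h1 : ‖∑ n ∈ Finset.Icc 1 N, (f (pt α n) - g (pt α n))‖ ≤ N * ‖f - g‖ := by
      refine le_trans (norm_sum_le _ _) ?_
      have : ∀ n ∈ Finset.Icc 1 N, ‖f (pt α n) - g (pt α n)‖ ≤ ‖f - g‖ := by
        intro n _
        simpa using (f - g).norm_coe_le_norm (pt α n)
      refine le_trans (Finset.sum_le_sum this) ?_
      simp [Nat.card_Icc]
    have h2 : ‖(N:ℂ)⁻¹‖ = (N:ℝ)⁻¹ := by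
      simp
    rw [h2]
    calc (N:ℝ)⁻¹ * ‖∑ n ∈ Finset.Icc 1 N, (f (pt α n) - g (pt α n))‖
        ≤ (N:ℝ)⁻¹ * (N * ‖f - g‖) := by
          apply mul_le_mul_of_nonneg_left h1 (by positivity)
      _ = ‖f - g‖ := by
          field_simp

lemma fourier_pt (α : ℝ) (k : ℤ) (n : ℕ) :
    fourier k (pt α n) = (fourier k ((α : ℝ) : AddCircle (1:ℝ)))^n := by
  rw [pt, fourier_coe_apply, fourier_coe_apply, ← Complex.exp_nat_mul]
  congr 1
  push_cast
  ring

lemma fourier_ne_one (α : ℝ) (hα : Irrational α) (k : ℤ) (hk : k ≠ 0) :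
    fourier k ((α : ℝ) : AddCircle (1:ℝ)) ≠ 1 := by
  rw [fourier_coe_apply]
  intro h
  rw [Complex.exp_eq_one_iff] at h
  obtain ⟨m, hm⟩ := h
  have h2 : (2 * Real.pi * Complex.I) ≠ 0 := by
    simp [Real.pi_ne_zero, Complex.I_ne_zero]
  have : (k : ℂ) * α = (m : ℂ) := by
    field_simp at hm
    have hm' : (k:ℂ) * α * (2 * Real.pi * Complex.I) = (m:ℂ) * (2 * Real.pi * Complex.I) := by
      rw [hm]; push_cast; ring
    exact mul_right_cancel₀ h2 hm'
  have hre : (k : ℝ) * α = (m : ℝ) := by exact_mod_cast this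
  apply hα
  refine ⟨(m : ℚ) / (k : ℚ), ?_⟩
  have hk' : (k : ℝ) ≠ 0 := Int.cast_ne_zero.mpr hk
  push_cast
  field_simp
  linarith [hre]

lemma avg_fourier_tendsto (α : ℝ) (hα : Irrational α) (k : ℤ) :
    Tendsto (avg α (fun x : AddCircle (1:ℝ) => fourier k x)) atTop (nhds (∫ x : AddCircle (1:ℝ), fourier k x)) := by
  rcases eq_or_ne k 0 with rfl | hk
  · have h1 : ∀ N : ℕ, 1 ≤ N → avg α (fourier 0) N = 1 := by
      intro N hN
      simp only [avg, fourier_zero]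
      rw [Finset.sum_const, Nat.card_Icc]
      simp only [Nat.add_sub_cancel, nsmul_eq_mul, mul_one]
      exact inv_mul_cancel₀ (Nat.cast_ne_zero.mpr (by omega))
    have h2 : (∫ x : AddCircle (1:ℝ), fourier 0 x) = 1 := by
      simp only [fourier_zero]
      simp [AddCircle.measure_univ, measureReal_def]
    rw [h2]
    refine Tendsto.congr' ?_ tendsto_const_nhds
    filter_upwards [eventually_ge_atTop 1] with N hN
    exact (h1 N hN).symm
  · -- integral is zero
    have hint : (∫ x : AddCircle (1:ℝ), fourier k x) = 0 := by
      exact integral_eq_zero_of_add_right_eq_neg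
        (fourier_add_half_inv_index hk one_pos)
    rw [hint]
    set z : ℂ := fourier k ((α : ℝ) : AddCircle (1:ℝ)) with hz
    have hz1 : z ≠ 1 := fourier_ne_one α hα k hk
    have hznorm : ‖z‖ = 1 := by
      rw [hz]
      exact Circle.norm_coe _
    have hbound : ∀ N : ℕ, ‖avg α (fourier k) N‖ ≤ (2 / ‖z - 1‖ + 1) / N := by
      intro N
      have hsum : ∑ n ∈ Finset.Icc 1 N, fourier k (pt α n)
          = (z ^ (N+1) - 1) / (z - 1) - 1 := by
        have : ∀ n ∈ Finset.Icc 1 N, fourier k (pt α n) = z ^ n := fun n _ => fourier_pt α k n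
        rw [Finset.sum_congr rfl this]
        have hIcc : Finset.Icc 1 N = Finset.range (N+1) \ {0} := by
          ext n
          simp [Finset.mem_Icc, Finset.mem_range, Nat.lt_succ_iff, Nat.one_le_iff_ne_zero]
          omega
        rw [hIcc, Finset.sum_sdiff_eq_sub (by simp), geom_sum_eq hz1]
        simp
      have hz0 : (0:ℝ) < ‖z - 1‖ := by
        rw [norm_pos_iff, sub_ne_zero]; exact hz1
      have hnorm_sum : ‖∑ n ∈ Finset.Icc 1 N, fourier k (pt α n)‖ ≤ 2 / ‖z - 1‖ + 1 := by
        rw [hsum]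
        have h1 : ‖z ^ (N+1) - 1‖ ≤ 2 := by
          refine le_trans (norm_sub_le _ _) ?_
          rw [norm_pow, hznorm, one_pow, norm_one]; norm_num
        calc ‖(z ^ (N+1) - 1) / (z - 1) - 1‖ ≤ ‖(z ^ (N+1) - 1) / (z - 1)‖ + 1 := by
              simpa using norm_sub_le ((z ^ (N+1) - 1) / (z - 1)) 1
          _ ≤ 2 / ‖z - 1‖ + 1 := by
              rw [norm_div]; gcongr
      rw [avg, norm_mul]
      have hN : ‖((N:ℕ):ℂ)⁻¹‖ = (N:ℝ)⁻¹ := by simp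
      rw [hN]
      calc (N:ℝ)⁻¹ * ‖∑ n ∈ Finset.Icc 1 N, fourier k (pt α n)‖
          ≤ (N:ℝ)⁻¹ * (2 / ‖z - 1‖ + 1) :=
            mul_le_mul_of_nonneg_left hnorm_sum (by positivity)
        _ = (2 / ‖z - 1‖ + 1) / N := by rw [inv_mul_eq_div]
    exact squeeze_zero_norm hbound (tendsto_const_div_atTop_nhds_zero_nat _)



lemma integral_dist_le (f g : C(AddCircle (1:ℝ), ℂ)) :
    ‖(∫ x : AddCircle (1:ℝ), f x) - ∫ x : AddCircle (1:ℝ), g x‖ ≤ ‖f - g‖ := by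
  rw [← integral_sub (contMap_integrable f) (contMap_integrable g)]
  have h := norm_integral_le_of_norm_le_const
    (μ := (volume : Measure (AddCircle (1:ℝ)))) (C := ‖f - g‖)
    (f := fun x => f x - g x) (Filter.Eventually.of_forall ?_)
  · have huniv : ((volume : Measure (AddCircle (1:ℝ))) Set.univ).toReal = 1 := by
      rw [AddCircle.measure_univ]; simp
    rw [measureReal_def, huniv, mul_one] at h
    exact h
  · intro x
    simpa using (f - g).norm_coe_le_norm x

lemma avg_tendsto_integral (α : ℝ) (hα : Irrational α) (f : C(AddCircle (1:ℝ), ℂ)) :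
    Tendsto (avg α f) atTop (nhds (∫ x : AddCircle (1:ℝ), f x)) := by
  set P : Set C(AddCircle (1:ℝ), ℂ) :=
    {g | Tendsto (avg α g) atTop (nhds (∫ x : AddCircle (1:ℝ), g x))} with hP
  have havg_add : ∀ (g h : C(AddCircle (1:ℝ), ℂ)) (N : ℕ),
      avg α (g + h) N = avg α g N + avg α h N := by
    intro g h N
    simp [avg, Finset.sum_add_distrib, mul_add]
  have hadd : ∀ g h : C(AddCircle (1:ℝ), ℂ), g ∈ P → h ∈ P → g + h ∈ P := by
    intro g h hg hh
    have := hg.add hh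
    rw [← integral_add (contMap_integrable g) (contMap_integrable h)] at this
    refine Tendsto.congr (fun N => (havg_add g h N).symm) ?_
    convert this using 2
    rfl
  have hzero : (0 : C(AddCircle (1:ℝ), ℂ)) ∈ P := by
    simp only [hP, Set.mem_setOf_eq]
    have h0 : (avg α ⇑(0 : C(AddCircle (1:ℝ), ℂ))) = fun _ => (0:ℂ) := by
      funext N; simp [avg]
    have hi : (∫ x : AddCircle (1:ℝ), (0 : C(AddCircle (1:ℝ), ℂ)) x) = 0 := by simp
    rw [h0, hi]
    exact tendsto_const_nhds
  have hsmul : ∀ (c : ℂ) (g : C(AddCircle (1:ℝ), ℂ)), g ∈ P → c • g ∈ P := by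
    intro c g hg
    have h1 : ∀ N, avg α (⇑(c • g)) N = c * avg α (⇑g) N := by
      intro N
      simp only [avg, ContinuousMap.coe_smul, Pi.smul_apply, smul_eq_mul]
      rw [← Finset.mul_sum]
      ring
    have := hg.const_mul c
    refine Tendsto.congr (fun N => (h1 N).symm) ?_
    convert this using 2
    rw [show (fun x : AddCircle (1:ℝ) => (c • g) x) = fun x => c • g x from rfl]
    rw [integral_smul]
    simp
  have hclosed : IsClosed P := by
    refine isClosed_of_closure_subset ?_
    intro f hf
    simp only [hP, Set.mem_setOf_eq]
    rw [Metric.tendsto_atTop]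
    intro ε hε
    obtain ⟨g, hgP, hgd⟩ := Metric.mem_closure_iff.mp hf (ε/3) (by linarith)
    have hg := hgP
    rw [hP, Set.mem_setOf_eq, Metric.tendsto_atTop] at hg
    obtain ⟨N₀, hN₀⟩ := hg (ε/3) (by linarith)
    refine ⟨N₀, fun N hN => ?_⟩
    have hdfg : dist f g = ‖f - g‖ := dist_eq_norm f g
    have h1 : ‖avg α f N - avg α g N‖ ≤ ‖f - g‖ := norm_avg_sub_le α f g N
    have h2 : dist (avg α g N) (∫ x : AddCircle (1:ℝ), g x) < ε/3 := hN₀ N hN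
    have h3 : ‖(∫ x : AddCircle (1:ℝ), g x) - ∫ x : AddCircle (1:ℝ), f x‖ ≤ ‖g - f‖ :=
      integral_dist_le g f
    have hgf : ‖g - f‖ = ‖f - g‖ := norm_sub_rev g f
    calc dist (avg α f N) (∫ x : AddCircle (1:ℝ), f x)
        ≤ dist (avg α f N) (avg α g N) + dist (avg α g N) (∫ x : AddCircle (1:ℝ), g x)
          + dist (∫ x : AddCircle (1:ℝ), g x) (∫ x : AddCircle (1:ℝ), f x) :=
          dist_triangle4 _ _ _ _
      _ < ε/3 + ε/3 + ε/3 := by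
          refine add_lt_add_of_lt_of_lt (add_lt_add_of_le_of_lt ?_ h2) ?_
          · rw [dist_eq_norm]
            exact (lt_of_le_of_lt h1 (by rw [← hdfg]; exact hgd)).le
          · rw [dist_eq_norm]
            exact lt_of_le_of_lt h3 (by rw [hgf, ← hdfg]; exact hgd)
      _ = ε := by ring
  have hfour : ∀ k : ℤ, (fourier k : C(AddCircle (1:ℝ), ℂ)) ∈ P := fun k =>
    avg_fourier_tendsto α hα k
  have hspan : (↑(Submodule.span ℂ (Set.range (@fourier 1))) : Set C(AddCircle (1:ℝ), ℂ)) ⊆ P := by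
    intro g hg
    induction hg using Submodule.span_induction with
    | mem x hx => obtain ⟨k, rfl⟩ := hx; exact hfour k
    | zero => exact hzero
    | add x y hx hy hpx hpy => exact hadd x y hpx hpy
    | smul c x hx hpx => exact hsmul c x hpx
  have hmem : f ∈ closure (↑(Submodule.span ℂ (Set.range (@fourier 1))) :
      Set C(AddCircle (1:ℝ), ℂ)) := by
    rw [← Submodule.topologicalClosure_coe, span_fourier_closure_eq_top]
    trivial
  exact closure_minimal hspan hclosed hmem


lemma avg_tendsto_integral_real (α : ℝ) (hα : Irrational α) (g : C(AddCircle (1:ℝ), ℝ)) :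
    Tendsto (fun N : ℕ => (N : ℝ)⁻¹ * ∑ n ∈ Finset.Icc 1 N, g (pt α n))
      atTop (nhds (∫ x : AddCircle (1:ℝ), g x)) := by
  set gc : C(AddCircle (1:ℝ), ℂ) :=
    ⟨fun x => (g x : ℂ), Complex.continuous_ofReal.comp g.continuous⟩ with hgc
  have hC := avg_tendsto_integral α hα gc
  have hint : (∫ x : AddCircle (1:ℝ), gc x) = ((∫ x : AddCircle (1:ℝ), g x : ℝ) : ℂ) := by
    simp only [hgc, ContinuousMap.coe_mk]
    exact integral_ofReal
  have h2 : ∀ N, avg α gc N = (((N : ℝ)⁻¹ * ∑ n ∈ Finset.Icc 1 N, g (pt α n) : ℝ) : ℂ) := by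
    intro N
    simp only [avg, hgc, ContinuousMap.coe_mk]
    push_cast
    ring
  rw [hint] at hC
  have h3 := (Complex.continuous_re.tendsto _).comp hC
  have h4 : (Complex.re ∘ fun N : ℕ => avg α gc N)
      = fun N : ℕ => (N : ℝ)⁻¹ * ∑ n ∈ Finset.Icc 1 N, g (pt α n) := by
    funext N
    simp [h2 N]
  rw [h4] at h3
  simpa using h3

lemma coe_fract (x : ℝ) : ((Int.fract x : ℝ) : AddCircle (1:ℝ)) = ((x : ℝ) : AddCircle (1:ℝ)) := by
  have h1 : ((Int.fract x : ℝ) : AddCircle (1:ℝ))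
      = ((x : ℝ) : AddCircle (1:ℝ)) - (((⌊x⌋ : ℝ) : ℝ) : AddCircle (1:ℝ)) := by
    rw [Int.fract, ← QuotientAddGroup.mk_sub]
  have h2 : (((⌊x⌋ : ℝ) : ℝ) : AddCircle (1:ℝ)) = 0 := by
    rw [AddCircle.coe_eq_zero_iff]
    exact ⟨⌊x⌋, by simp⟩
  rw [h1, h2, sub_zero]

lemma mem_image_iff_fract {s t : ℝ} (hs : 0 ≤ s) (ht : t ≤ 1) (x : ℝ) :
    ((x : ℝ) : AddCircle (1:ℝ)) ∈ (fun y : ℝ => ((y : ℝ) : AddCircle (1:ℝ))) '' Set.Ico s t ↔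
      Int.fract x ∈ Set.Ico s t := by
  constructor
  · rintro ⟨y, hy, he⟩
    have hy01 : y ∈ Set.Ico (0:ℝ) (0 + 1) := by
      simp only [zero_add]
      exact ⟨hs.trans hy.1, lt_of_lt_of_le hy.2 ht⟩
    have hf01 : Int.fract x ∈ Set.Ico (0:ℝ) (0 + 1) := by
      simp only [zero_add]
      exact ⟨Int.fract_nonneg x, Int.fract_lt_one x⟩
    have he2 : ((y : ℝ) : AddCircle (1:ℝ)) = ((Int.fract x : ℝ) : AddCircle (1:ℝ)) := by
      rw [coe_fract]; exact he
    have := (AddCircle.coe_eq_coe_iff_of_mem_Ico hy01 hf01).mp he2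
    rwa [← this]
  · intro h
    exact ⟨Int.fract x, h, coe_fract x⟩

lemma volume_image_eq {A : Set ℝ} {c : ℝ} (hA : A ⊆ Set.Ioc c (c+1))
    (hmeas : MeasurableSet ((fun y : ℝ => ((y : ℝ) : AddCircle (1:ℝ))) '' A)) :
    volume ((fun y : ℝ => ((y : ℝ) : AddCircle (1:ℝ))) '' A) = volume A := by
  rw [AddCircle.add_projection_respects_measure (T := 1) c hmeas]
  congr 1
  ext x
  simp only [Set.mem_inter_iff, Set.mem_preimage, Set.mem_image]
  constructor
  · rintro ⟨⟨y, hyA, hxy⟩, hx⟩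
    have hsub : (y : ℝ) - x ∈ AddSubgroup.zmultiples (1:ℝ) :=
      (QuotientAddGroup.eq_iff_sub_mem).mp hxy
    obtain ⟨k, hk⟩ := AddSubgroup.mem_zmultiples_iff.mp hsub
    have hk' : (k : ℝ) = y - x := by simpa using hk
    have hy' := hA hyA
    have h1 : -1 < (k : ℝ) := by
      rw [hk']
      have := hy'.1
      have := hx.2
      linarith
    have h2 : (k : ℝ) < 1 := by
      rw [hk']
      have := hy'.2
      have := hx.1
      linarith
    have hk0 : k = 0 := by
      have ha : (-1 : ℤ) < k := by exact_mod_cast h1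
      have hb : k < 1 := by exact_mod_cast h2
      omega
    have : y = x := by
      have : (k : ℝ) = 0 := by rw [hk0]; simp
      linarith [hk'.symm.trans this]
    rwa [← this]
  · intro hx
    exact ⟨⟨x, hx, rfl⟩, hA hx⟩


lemma urysohn_pair {s t δ : ℝ} (hs : 0 ≤ s) (hst : s < t) (ht : t ≤ 1)
    (hδ0 : 0 < δ) (hδ : 2 * δ < t - s) :
    ∃ F G : C(AddCircle (1:ℝ), ℝ),
      (∀ x, F x ≤ Set.indicator ((fun y : ℝ => ((y : ℝ) : AddCircle (1:ℝ))) '' Set.Ico s t)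
        (fun _ => (1:ℝ)) x) ∧
      (∀ x, Set.indicator ((fun y : ℝ => ((y : ℝ) : AddCircle (1:ℝ))) '' Set.Ico s t)
        (fun _ => (1:ℝ)) x ≤ G x) ∧
      t - s - 2*δ ≤ (∫ x : AddCircle (1:ℝ), F x) ∧
      (∫ x : AddCircle (1:ℝ), G x) ≤ t - s + 2*δ := by
  set mk : ℝ → AddCircle (1:ℝ) := fun y : ℝ => ((y : ℝ) : AddCircle (1:ℝ)) with hmk
  set I : Set (AddCircle (1:ℝ)) := mk '' Set.Ico s t with hI
  -- lower pair
  set K : Set (AddCircle (1:ℝ)) := mk '' Set.Icc (s+δ) (t-δ) with hK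
  set U : Set (AddCircle (1:ℝ)) := mk '' Set.Ioo s t with hU
  have hKc : IsCompact K := isCompact_Icc.image (AddCircle.continuous_mk' 1)
  have hUo : IsOpen U := QuotientAddGroup.isOpenMap_coe _ isOpen_Ioo
  have hKU : K ⊆ U := Set.image_mono (fun x hx => ⟨by linarith [hx.1], by linarith [hx.2]⟩)
  have hdisj : Disjoint K Uᶜ := Set.disjoint_left.mpr fun x hxK hxC => hxC (hKU hxK)
  obtain ⟨F, hF1, hF0, _, hF01⟩ :=
    exists_continuous_one_zero_of_isCompact hKc hUo.isClosed_compl hdisj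
  -- upper pair
  set J : Set (AddCircle (1:ℝ)) := mk '' Set.Icc s t with hJ
  set W : Set (AddCircle (1:ℝ)) := mk '' Set.Ioo (s-δ) (t+δ) with hW
  have hJc : IsCompact J := isCompact_Icc.image (AddCircle.continuous_mk' 1)
  have hWo : IsOpen W := QuotientAddGroup.isOpenMap_coe _ isOpen_Ioo
  have hJW : J ⊆ W := Set.image_mono (fun x hx => ⟨by linarith [hx.1], by linarith [hx.2]⟩)
  have hdisj2 : Disjoint J Wᶜ := Set.disjoint_left.mpr fun x hxJ hxC => hxC (hJW hxJ)
  obtain ⟨G, hG1, hG0, _, hG01⟩ :=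
    exists_continuous_one_zero_of_isCompact hJc hWo.isClosed_compl hdisj2
  refine ⟨F, G, ?_, ?_, ?_, ?_⟩
  · -- F ≤ indicator I
    intro x
    by_cases hx : x ∈ U
    · have hxI : x ∈ I := by
        obtain ⟨y, hy, rfl⟩ := hx
        exact ⟨y, ⟨hy.1.le, hy.2⟩, rfl⟩
      rw [Set.indicator_of_mem hxI]
      exact (hF01 x).2
    · rw [hF0 hx]
      simp only [Pi.zero_apply]
      exact Set.indicator_nonneg (fun _ _ => zero_le_one) x
  · -- indicator I ≤ G
    intro x
    by_cases hx : x ∈ I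
    · have hxJ : x ∈ J := by
        obtain ⟨y, hy, rfl⟩ := hx
        exact ⟨y, ⟨hy.1, hy.2.le⟩, rfl⟩
      rw [Set.indicator_of_mem hx, hG1 hxJ]
      simp
    · rw [Set.indicator_of_notMem hx]
      exact (hG01 x).1
  · -- lower integral bound
    have hKmeas : MeasurableSet K := hKc.isClosed.measurableSet
    have hKvol : volume K = ENNReal.ofReal (t - s - 2*δ) := by
      rw [hK, volume_image_eq (c := t - δ - 1)
        (fun x hx => ⟨by linarith [hx.1, ht, hδ0], by linarith [hx.2]⟩) (hK ▸ hKmeas)]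
      rw [Real.volume_Icc]
      congr 1
      ring
    have hind : ∀ x, Set.indicator K (fun _ => (1:ℝ)) x ≤ F x := by
      intro x
      by_cases hx : x ∈ K
      · rw [Set.indicator_of_mem hx, hF1 hx]
        simp
      · rw [Set.indicator_of_notMem hx]
        exact (hF01 x).1
    have hFint : Integrable (⇑F) (volume : Measure (AddCircle (1:ℝ))) :=
      F.continuous.integrable_of_hasCompactSupport (HasCompactSupport.of_compactSpace _)
    have hIind : Integrable (Set.indicator K (fun _ => (1:ℝ)))
        (volume : Measure (AddCircle (1:ℝ))) := by
      rw [integrable_indicator_iff hKmeas]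
      exact integrableOn_const (measure_lt_top _ _).ne
    have := integral_mono hIind hFint hind
    rw [integral_indicator_const (1:ℝ) hKmeas] at this
    rw [measureReal_def, hKvol] at this
    rw [ENNReal.toReal_ofReal (by linarith)] at this
    simpa using this
  · -- upper integral bound
    have hWmeas : MeasurableSet W := hWo.measurableSet
    have hWvol : volume W ≤ ENNReal.ofReal (t - s + 2*δ) := by
      by_cases hle : t + δ - (s - δ) ≤ 1
      · rw [hW, volume_image_eq (c := t + δ - 1)
          (fun x hx => ⟨by linarith [hx.1], by linarith [hx.2]⟩) (hW ▸ hWo.measurableSet)]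
        rw [Real.volume_Ioo]
        exact le_of_eq (by congr 1; ring)
      · refine le_trans (measure_mono (Set.subset_univ _)) ?_
        rw [AddCircle.measure_univ]
        exact ENNReal.ofReal_le_ofReal (by linarith)
    have hind : ∀ x, G x ≤ Set.indicator W (fun _ => (1:ℝ)) x := by
      intro x
      by_cases hx : x ∈ W
      · rw [Set.indicator_of_mem hx]
        exact (hG01 x).2
      · rw [Set.indicator_of_notMem hx, hG0 hx]
        simp
    have hGint : Integrable (⇑G) (volume : Measure (AddCircle (1:ℝ))) :=
      G.continuous.integrable_of_hasCompactSupport (HasCompactSupport.of_compactSpace _)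
    have hIind : Integrable (Set.indicator W (fun _ => (1:ℝ)))
        (volume : Measure (AddCircle (1:ℝ))) := by
      rw [integrable_indicator_iff hWmeas]
      exact integrableOn_const (measure_lt_top _ _).ne
    have h2 := integral_mono hGint hIind hind
    rw [integral_indicator_const (1:ℝ) hWmeas] at h2
    refine le_trans h2 ?_
    have := ENNReal.toReal_le_of_le_ofReal (by linarith) hWvol
    simpa [measureReal_def] using this


end WeylEquidistAux

open WeylEquidistAux in
theorem irrational_mul_equidistributed (α : ℝ) (hα : Irrational α) :
    ∀ s t : ℝ, 0 ≤ s → s < t → t ≤ 1 →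
      Tendsto
        (fun N : ℕ =>
          (((Finset.Icc 1 N).filter
              (fun n : ℕ => Int.fract (α * n) ∈ Set.Ico s t)).card : ℝ) / N)
        atTop (nhds (t - s)) := by
  intro s t hs hst ht
  haveI : Fact ((0:ℝ) < 1) := ⟨one_pos⟩
  set I : Set (AddCircle (1:ℝ)) := (fun y : ℝ => ((y : ℝ) : AddCircle (1:ℝ))) '' Set.Ico s t
    with hI
  have hcard : ∀ N : ℕ,
      (((Finset.Icc 1 N).filter (fun n : ℕ => Int.fract (α * n) ∈ Set.Ico s t)).card : ℝ)
        = ∑ n ∈ Finset.Icc 1 N, Set.indicator I (fun _ => (1:ℝ)) (pt α n) := by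
    intro N
    rw [← Finset.sum_boole]
    refine Finset.sum_congr rfl ?_
    intro n _
    rw [Set.indicator_apply]
    by_cases h : Int.fract (α * n) ∈ Set.Ico s t
    · have hmem : pt α n ∈ I := (mem_image_iff_fract hs ht (α * n)).mpr h
      rw [if_pos h, if_pos hmem]
    · have hmem : pt α n ∉ I := fun hmem => h ((mem_image_iff_fract hs ht (α * n)).mp hmem)
      rw [if_neg h, if_neg hmem]
  rw [Metric.tendsto_atTop]
  intro ε hε
  set δ : ℝ := min (ε/4) ((t-s)/4) with hδdef
  have hδ0 : 0 < δ := lt_min (by linarith) (by linarith)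
  have hδε : δ ≤ ε/4 := min_le_left _ _
  have hδts : δ ≤ (t-s)/4 := min_le_right _ _
  obtain ⟨F, G, hFle, hGge, hFint, hGint⟩ :=
    urysohn_pair hs hst ht hδ0 (by linarith)
  have hF := avg_tendsto_integral_real α hα F
  have hG := avg_tendsto_integral_real α hα G
  have hF' := hF.eventually (eventually_gt_nhds
    (show (∫ x : AddCircle (1:ℝ), F x) - δ < (∫ x : AddCircle (1:ℝ), F x) by linarith))
  have hG' := hG.eventually (eventually_lt_nhds
    (show (∫ x : AddCircle (1:ℝ), G x) < (∫ x : AddCircle (1:ℝ), G x) + δ by linarith))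
  have hcomb := (hF'.and hG').and (eventually_ge_atTop 1)
  rw [eventually_atTop] at hcomb
  obtain ⟨N₀, hN₀⟩ := hcomb
  refine ⟨N₀, fun N hN => ?_⟩
  obtain ⟨⟨h5, h6⟩, h7⟩ := hN₀ N hN
  have hNpos : (0:ℝ) < (N:ℝ) := by
    have : (1:ℕ) ≤ N := h7
    exact_mod_cast Nat.lt_of_lt_of_le Nat.zero_lt_one this
  have hsumF : ∑ n ∈ Finset.Icc 1 N, F (pt α n)
      ≤ ∑ n ∈ Finset.Icc 1 N, Set.indicator I (fun _ => (1:ℝ)) (pt α n) :=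
    Finset.sum_le_sum (fun n _ => hFle (pt α n))
  have hsumG : ∑ n ∈ Finset.Icc 1 N, Set.indicator I (fun _ => (1:ℝ)) (pt α n)
      ≤ ∑ n ∈ Finset.Icc 1 N, G (pt α n) :=
    Finset.sum_le_sum (fun n _ => hGge (pt α n))
  have hinv : (0:ℝ) ≤ (N:ℝ)⁻¹ := by positivity
  set a : ℝ := (((Finset.Icc 1 N).filter
      (fun n : ℕ => Int.fract (α * n) ∈ Set.Ico s t)).card : ℝ) / N with ha
  have ha' : a = (N:ℝ)⁻¹ * ∑ n ∈ Finset.Icc 1 N, Set.indicator I (fun _ => (1:ℝ)) (pt α n) := by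
    rw [ha, hcard N, div_eq_inv_mul]
  have hlow : (N:ℝ)⁻¹ * ∑ n ∈ Finset.Icc 1 N, F (pt α n) ≤ a := by
    rw [ha']
    exact mul_le_mul_of_nonneg_left hsumF hinv
  have hhigh : a ≤ (N:ℝ)⁻¹ * ∑ n ∈ Finset.Icc 1 N, G (pt α n) := by
    rw [ha']
    exact mul_le_mul_of_nonneg_left hsumG hinv
  rw [Real.dist_eq, abs_lt]
  constructor
  · have : (∫ x : AddCircle (1:ℝ), F x) - δ < a := lt_of_lt_of_le h5 hlow
    linarith
  · have : a < (∫ x : AddCircle (1:ℝ), G x) + δ := lt_of_le_of_lt hhigh h6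
    linarith
end
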